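/- Monotonicity of STL robustness under flattening and the encoding inequality: for any formula tree, if ρ* satisfies the encoding constraints with some 0/1 assignment z, then ρ* ≤ ρ^φ(y) for the root formula φ; consequently the optimal value of ρ* over all feasible encodings equals ρ^φ(y) exactly (the maximum of ρ* over feasible z and ρ* is attained and equals the robustness). -/
import Mathlib


/-- STL formula trees: predicate leaves (a predicate symbol and a timestep),
and finite (nonempty) conjunction and disjunction nodes. -/
inductive Formula (P : Type) : Type
  | pred : P → ℕ → Formula P
  | conj : (n : ℕ) → (Fin (n + 1) → Formula P) → Formula P
  | disj : (n : ℕ) → (Fin (n + 1) → Formula P) → Formula P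

/-- Robustness semantics: `ρ^π(y) = -g^π(y_t)`, `∧` is min over children,
`∨` is max over children. -/
noncomputable def Formula.rob {P Y : Type} (g : P → Y → ℝ) (y : ℕ → Y) :
    Formula P → ℝ
  | .pred π t => -(g π (y t))
  | .conj _ c => Finset.univ.inf' Finset.univ_nonempty (fun i => (c i).rob g y)
  | .disj _ c => Finset.univ.sup' Finset.univ_nonempty (fun i => (c i).rob g y)

/-- SOS1: nonnegative entries, summing to one, with (exactly) one entry equal to 1. -/
def IsSOS1 {n : ℕ} (v : Fin n → ℝ) : Prop :=
  (∀ i, 0 ≤ v i) ∧ (∑ i, v i = 1) ∧ ∃ j, v j = 1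

/-- The MICP encoding constraints, with indicator variables `z` indexed by the
node's position (path) in the tree: big-M constraints at leaves, `z^φ ≤ z^{φᵢ}`
at ∧-nodes, SOS1 on `(1 - z^φ, z^{φ₁}, …, z^{φ_N})` at ∨-nodes, and `z ∈ [0,1]`
everywhere. -/
def Formula.EncOK {P Y : Type} (g : P → Y → ℝ) (y : ℕ → Y) (M ρStar : ℝ)
    (z : List ℕ → ℝ) : Formula P → List ℕ → Prop
  | .pred π t, p => 0 ≤ z p ∧ z p ≤ 1 ∧ ρStar ≤ -(g π (y t)) + M * (1 - z p)
  | .conj n c, p => (0 ≤ z p ∧ z p ≤ 1) ∧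
      ∀ i : Fin (n + 1), z p ≤ z ((i : ℕ) :: p) ∧ (c i).EncOK g y M ρStar z ((i : ℕ) :: p)
  | .disj n c, p => (0 ≤ z p ∧ z p ≤ 1) ∧
      IsSOS1 (Fin.cons (1 - z p) (fun i : Fin (n + 1) => z ((i : ℕ) :: p))) ∧
      ∀ i : Fin (n + 1), (c i).EncOK g y M ρStar z ((i : ℕ) :: p)

section Aux
variable {P Y : Type} {g : P → Y → ℝ} {y : ℕ → Y} {M ρ : ℝ}

lemma path_unique {p r r' : List ℕ} {a b : ℕ}
    (h : r ++ (a :: p) = r' ++ (b :: p)) : a = b := by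
  have hl : r.length = r'.length := by
    have := congrArg List.length h
    simp at this; omega
  obtain ⟨h1, h2⟩ := List.append_inj h hl
  simpa using h2

lemma path_ne_self {p r : List ℕ} {a : ℕ} : p ≠ r ++ (a :: p) := by
  intro h
  have := congrArg List.length h
  simp at this; omega

lemma encok_congr : ∀ (φ : Formula P) (p : List ℕ) (z z' : List ℕ → ℝ),
    (∀ q r, q = r ++ p → z' q = z q) →
    φ.EncOK g y M ρ z p → φ.EncOK g y M ρ z' p := by
  intro φ
  induction φ with
  | pred π t =>
    intro p z z' h henc
    simp only [Formula.EncOK] at *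
    rw [h p [] (by simp)]; exact henc
  | conj n c ih =>
    intro p z z' h henc
    simp only [Formula.EncOK] at *
    obtain ⟨h0, hc⟩ := henc
    refine ⟨by rw [h p [] (by simp)]; exact h0, fun i => ⟨?_, ?_⟩⟩
    · rw [h p [] (by simp), h _ [(i:ℕ)] (by simp)]; exact (hc i).1
    · exact ih i ((i:ℕ)::p) z z'
        (fun q r hq => h q (r ++ [(i:ℕ)]) (by simp [hq])) (hc i).2
  | disj n c ih =>
    intro p z z' h henc
    simp only [Formula.EncOK] at *
    obtain ⟨h0, hs, hc⟩ := henc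
    have hco : (Fin.cons (1 - z' p) (fun i : Fin (n+1) => z' ((i:ℕ)::p)) : Fin (n+2) → ℝ)
        = Fin.cons (1 - z p) (fun i : Fin (n+1) => z ((i:ℕ)::p)) := by
      funext j
      refine Fin.cases ?_ (fun i => ?_) j
      · simp only [Fin.cons_zero]; rw [h p [] (by simp)]
      · simp only [Fin.cons_succ]; rw [h ((i:ℕ)::p) [(i:ℕ)] (by simp)]
    refine ⟨by rw [h p [] (by simp)]; exact h0, by rw [hco]; exact hs, fun i => ?_⟩
    exact ih i ((i:ℕ)::p) z z'
      (fun q r hq => h q (r ++ [(i:ℕ)]) (by simp [hq])) (hc i)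

lemma encok_zero (hM' : ∀ (π : P) (t : ℕ), ρ ≤ -(g π (y t)) + M) :
    ∀ (φ : Formula P) (p : List ℕ), φ.EncOK g y M ρ (fun _ => 0) p := by
  intro φ
  induction φ with
  | pred π t =>
    intro p
    simp only [Formula.EncOK]
    refine ⟨le_refl _, by norm_num, ?_⟩
    have := hM' π t; linarith
  | conj n c ih =>
    intro p
    exact ⟨⟨le_refl _, by norm_num⟩, fun i => ⟨le_refl _, ih i _⟩⟩
  | disj n c ih =>
    intro p
    refine ⟨⟨le_refl _, by norm_num⟩, ⟨?_, ?_, ⟨0, by simp⟩⟩, fun i => ih i _⟩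
    · intro j; refine Fin.cases ?_ (fun i => ?_) j <;> simp
    · simp [Fin.sum_cons]

lemma encok_sound : ∀ (φ : Formula P) (p : List ℕ) (z : List ℕ → ℝ),
    (∀ q, z q = 0 ∨ z q = 1) → φ.EncOK g y M ρ z p → z p = 1 → ρ ≤ φ.rob g y := by
  intro φ
  induction φ with
  | pred π t =>
    intro p z h01 henc hz
    obtain ⟨_, _, h⟩ := henc
    rw [hz] at h
    simpa [Formula.rob] using h
  | conj n c ih =>
    intro p z h01 henc hz
    obtain ⟨_, hc⟩ := henc
    simp only [Formula.rob]
    refine Finset.le_inf' _ _ (fun i _ => ?_)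
    have hzi : z ((i:ℕ)::p) = 1 := by
      rcases h01 ((i:ℕ)::p) with h | h
      · exfalso; have := (hc i).1; rw [hz, h] at this; linarith
      · exact h
    exact ih i _ z h01 (hc i).2 hzi
  | disj n c ih =>
    intro p z h01 henc hz
    obtain ⟨_, ⟨_, _, j, hj⟩, hc⟩ := henc
    refine Fin.cases ?_ (fun i hi => ?_) j hj
    · intro h; rw [Fin.cons_zero, hz] at h; norm_num at h
    · rw [Fin.cons_succ] at hi
      have := ih i _ z h01 (hc i) hi
      simp only [Formula.rob]
      exact this.trans (Finset.le_sup' (fun i => (c i).rob g y) (Finset.mem_univ i))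

lemma encok_complete (hM' : ∀ (π : P) (t : ℕ), ρ ≤ -(g π (y t)) + M) :
    ∀ (φ : Formula P), ρ ≤ φ.rob g y → ∀ (p : List ℕ),
    ∃ z : List ℕ → ℝ, (∀ q, z q = 0 ∨ z q = 1) ∧ z p = 1 ∧ φ.EncOK g y M ρ z p := by
  intro φ
  induction φ with
  | pred π t =>
    intro hρ p
    refine ⟨fun q => if q = p then 1 else 0, fun q => ?_, by simp, ?_⟩
    · by_cases h : q = p <;> simp [h]
    · simp only [Formula.EncOK, if_pos rfl]
      refine ⟨by norm_num, by norm_num, ?_⟩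
      simp only [Formula.rob] at hρ
      norm_num
      linarith
  | conj n c ih =>
    intro hρ p
    have hρi : ∀ i : Fin (n+1), ρ ≤ (c i).rob g y := fun i =>
      hρ.trans (Finset.inf'_le _ (Finset.mem_univ i))
    choose z hz01 hz1 hEnc using fun i => ih i (hρi i) ((i:ℕ)::p)
    classical
    set Z : List ℕ → ℝ := fun q =>
      if h : ∃ i : Fin (n+1), ∃ r : List ℕ, q = r ++ ((i:ℕ) :: p) then z h.choose q
      else if q = p then 1 else 0 with hZdef
    have key : ∀ (i : Fin (n+1)) (q : List ℕ), (∃ r, q = r ++ ((i:ℕ)::p)) → Z q = z i q := by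
      intro i q ⟨r, hr⟩
      have hex : ∃ i' : Fin (n+1), ∃ r' : List ℕ, q = r' ++ ((i':ℕ) :: p) := ⟨i, r, hr⟩
      have : hex.choose = i := by
        obtain ⟨r', hr'⟩ := hex.choose_spec
        exact Fin.ext (path_unique (hr' ▸ hr))
      simp only [hZdef, dif_pos hex, this]
    have hZp : Z p = 1 := by
      have hne : ¬ ∃ i : Fin (n+1), ∃ r : List ℕ, p = r ++ ((i:ℕ) :: p) := by
        rintro ⟨i, r, hr⟩; exact path_ne_self hr
      simp [hZdef, dif_neg hne]
    refine ⟨Z, ?_, hZp, ?_⟩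
    · intro q
      by_cases h : ∃ i : Fin (n+1), ∃ r : List ℕ, q = r ++ ((i:ℕ) :: p)
      · simp only [hZdef, dif_pos h]; exact hz01 _ q
      · by_cases hq : q = p
        · rw [hq, hZp]; exact Or.inr rfl
        · left; simp [hZdef, dif_neg h, if_neg hq]
    · refine ⟨⟨by rw [hZp]; norm_num, le_of_eq hZp⟩, fun i => ⟨?_, ?_⟩⟩
      · rw [hZp, key i ((i:ℕ)::p) ⟨[], rfl⟩, hz1 i]
      · exact encok_congr (c i) _ (z i) Z
          (fun q r hq => key i q ⟨r, hq⟩) (hEnc i)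
  | disj n c ih =>
    intro hρ p
    classical
    obtain ⟨j, _, hjeq⟩ := Finset.exists_mem_eq_sup' (Finset.univ_nonempty)
      (fun i : Fin (n+1) => (c i).rob g y)
    have hρj : ρ ≤ (c j).rob g y := by
      simp only [Formula.rob] at hρ; rw [hjeq] at hρ; exact hρ
    obtain ⟨zj, hz01, hz1, hEnc⟩ := ih j hρj ((j:ℕ)::p)
    set Z : List ℕ → ℝ := fun q =>
      if ∃ r : List ℕ, q = r ++ ((j:ℕ) :: p) then zj q
      else if q = p then 1 else 0 with hZdef
    have keyj : ∀ (q : List ℕ), (∃ r, q = r ++ ((j:ℕ)::p)) → Z q = zj q := by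
      intro q h; simp only [hZdef, if_pos h]
    have keyi : ∀ (i : Fin (n+1)), i ≠ j → ∀ (q : List ℕ),
        (∃ r, q = r ++ ((i:ℕ)::p)) → Z q = 0 := by
      rintro i hij q ⟨r, hr⟩
      have h1 : ¬ ∃ r' : List ℕ, q = r' ++ ((j:ℕ) :: p) := by
        rintro ⟨r', hr'⟩
        exact hij (Fin.ext (path_unique ((hr ▸ hr') : r ++ ((i:ℕ)::p) = r' ++ ((j:ℕ)::p))))
      have h2 : q ≠ p := fun h => path_ne_self (h ▸ hr)
      simp [hZdef, if_neg h1, h2]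
    have hZp : Z p = 1 := by
      have hne : ¬ ∃ r : List ℕ, p = r ++ ((j:ℕ) :: p) := by
        rintro ⟨r, hr⟩; exact path_ne_self hr
      simp [hZdef, if_neg hne]
    have hZi : ∀ i : Fin (n+1), Z ((i:ℕ)::p) = if i = j then 1 else 0 := by
      intro i
      by_cases hij : i = j
      · rw [hij, if_pos rfl, keyj ((j:ℕ)::p) ⟨[], rfl⟩, hz1]
      · rw [if_neg hij, keyi i hij ((i:ℕ)::p) ⟨[], rfl⟩]
    refine ⟨Z, ?_, hZp, ?_⟩
    · intro q
      by_cases h : ∃ r : List ℕ, q = r ++ ((j:ℕ) :: p)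
      · simp only [hZdef, if_pos h]; exact hz01 q
      · by_cases hq : q = p
        · rw [hq, hZp]; exact Or.inr rfl
        · left; simp [hZdef, if_neg h, if_neg hq]
    · refine ⟨⟨by rw [hZp]; norm_num, le_of_eq hZp⟩, ?_, fun i => ?_⟩
      · refine ⟨?_, ?_, ⟨j.succ, ?_⟩⟩
        · intro k; refine Fin.cases ?_ (fun i => ?_) k
          · rw [Fin.cons_zero, hZp]; norm_num
          · rw [Fin.cons_succ, hZi]; by_cases h : i = j <;> simp [h]
        · rw [Fin.sum_cons, hZp]
          simp only [hZi]
          simp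
        · rw [Fin.cons_succ, hZi, if_pos rfl]
      · by_cases hij : i = j
        · subst hij
          exact encok_congr (c i) _ zj Z (fun q r hq => keyj q ⟨r, hq⟩) hEnc
        · exact encok_congr (c i) _ (fun _ => 0) Z
            (fun q r hq => keyi i hij q ⟨r, hq⟩) (encok_zero hM' (c i) _)

end Aux

/-- Soundness plus completeness: with `M` sufficiently large, every feasible
`(ρ*, z)` with 0/1 indicators and enforced root satisfies `ρ* ≤ ρ^φ(y)`, and the
value `ρ* = ρ^φ(y)` is itself feasible; hence the optimal value of `ρ*` over all
feasible encodings is attained and equals the robustness `ρ^φ(y)` exactly. -/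
theorem encoding_optimal {P Y : Type} (g : P → Y → ℝ) (y : ℕ → Y) (M : ℝ)
    (φ : Formula P) (p : List ℕ)
    (hM0 : 0 ≤ M)
    (hM : ∀ (π : P) (t : ℕ), φ.rob g y ≤ -(g π (y t)) + M) :
    (∀ (ρStar : ℝ) (z : List ℕ → ℝ), (∀ q, z q = 0 ∨ z q = 1) →
        φ.EncOK g y M ρStar z p → z p = 1 → ρStar ≤ φ.rob g y) ∧
    (∃ z : List ℕ → ℝ, (∀ q, z q = 0 ∨ z q = 1) ∧ z p = 1 ∧
        φ.EncOK g y M (φ.rob g y) z p) ∧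
    IsGreatest {ρStar : ℝ | ∃ z : List ℕ → ℝ, (∀ q, z q = 0 ∨ z q = 1) ∧
        z p = 1 ∧ φ.EncOK g y M ρStar z p} (φ.rob g y) := by
  have hsound := fun (ρStar : ℝ) (z : List ℕ → ℝ) (h01 : ∀ q, z q = 0 ∨ z q = 1)
    (henc : φ.EncOK g y M ρStar z p) (hz : z p = 1) =>
    encok_sound φ p z h01 henc hz
  have hcomp := encok_complete hM φ le_rfl p
  exact ⟨hsound, hcomp, hcomp, fun ρStar ⟨z, h01, hz, henc⟩ => hsound ρStar z h01 henc hz⟩
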